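/- There exists a constant C, depending only on ρ₀, such that for all integers m ≥ 0 and all ⌊m/2⌋ + 1 ≤ j ≤ m, (m!/(j!(m−j)!)) · N_{ρ,m+1}/(N_{ρ,j+1}·N_{ρ,m−j+3}) ≤ C/(m−j+1). -/

import Mathlib

open MeasureTheory Real Filter

noncomputable section

namespace HypP

/-- Japanese bracket `⟨y⟩ = (1+y²)^{1/2}`. -/
def br (y : ℝ) : ℝ := Real.sqrt (1 + y ^ 2)

/-- Weighting a function of `(x,y)` by `⟨y⟩^e`. -/
def wt (e : ℝ) (g : ℝ → ℝ → ℝ) : ℝ → ℝ → ℝ := fun x y => br y ^ e * g x y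

/-- `m`-th tangential derivative `∂ₓ^m`. -/
def Dx (m : ℕ) (g : ℝ → ℝ → ℝ) : ℝ → ℝ → ℝ :=
  fun x y => iteratedDeriv m (fun x' => g x' y) x

/-- `k`-th normal derivative `∂_y^k`. -/
def Dy (k : ℕ) (g : ℝ → ℝ → ℝ) : ℝ → ℝ → ℝ :=
  fun x y => iteratedDeriv k (fun y' => g x y') y

/-- Squared `L²` norm on the half-plane `ℝ × (0,∞)`. -/
def sqL2 (g : ℝ → ℝ → ℝ) : ℝ := ∫ x : ℝ, ∫ y in Set.Ioi (0 : ℝ), (g x y) ^ 2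

/-- `L²` inner product on the half-plane. -/
def ipL2 (f g : ℝ → ℝ → ℝ) : ℝ := ∫ x : ℝ, ∫ y in Set.Ioi (0 : ℝ), f x y * g x y

/-- Squared `L²ₓL^∞_y` norm on the half-plane. -/
def sqL2xLinfy (g : ℝ → ℝ → ℝ) : ℝ :=
  ∫ x : ℝ, (sSup ((fun y => |g x y|) '' Set.Ioi (0 : ℝ))) ^ 2

/-- The weight `H_{ρ,m,k}`. -/
def Hc (ρ : ℝ) (m k : ℕ) : ℝ :=
  ρ ^ (m + k + 1) * ((m : ℝ) + (k : ℝ) + 1) ^ 9 /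
    (((m + k).factorial : ℝ) * Real.sqrt (m.factorial : ℝ))

/-- The weight `N_{ρ,m} = H_{ρ,m,0}`. -/
def Nc (ρ : ℝ) (m : ℕ) : ℝ := Hc ρ m 0

/-- The weight `L_{ρ,k} = H_{ρ,1,k}`. -/
def Lc (ρ : ℝ) (k : ℕ) : ℝ := Hc ρ 1 k

/-- Squared anisotropic Gevrey norm `‖h‖²_{G^{3/2,1}_{ρ,ℓ}}`. -/
def gevSq (ρ ℓ : ℝ) (h : ℝ → ℝ → ℝ) : ℝ :=
  (∑' m : ℕ, (Nc ρ m * Real.sqrt (sqL2 (wt (ℓ - 1) (Dx m h)))) ^ 2)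
  + ∑' m : ℕ, ∑' k : ℕ,
      (((m : ℝ) + 1) * Hc ρ (m + 1) k *
        Real.sqrt (sqL2 (wt ℓ (Dx m (Dy (k + 1) h))))) ^ 2

/-- Anisotropic Gevrey norm. -/
def gevNorm (ρ ℓ : ℝ) (h : ℝ → ℝ → ℝ) : ℝ := Real.sqrt (gevSq ρ ℓ h)

/-- Membership in the anisotropic Gevrey space `G^{3/2,1}_{ρ,ℓ}`. -/
def InGev (ρ ℓ : ℝ) (h : ℝ → ℝ → ℝ) : Prop :=
  Summable (fun m : ℕ => (Nc ρ m * Real.sqrt (sqL2 (wt (ℓ - 1) (Dx m h)))) ^ 2) ∧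
  Summable (fun p : ℕ × ℕ =>
    (((p.1 : ℝ) + 1) * Hc ρ (p.1 + 1) p.2 *
      Real.sqrt (sqL2 (wt ℓ (Dx p.1 (Dy (p.2 + 1) h))))) ^ 2)

/-- Time derivative `∂ₜ`. -/
def pt (u : ℝ → ℝ → ℝ → ℝ) : ℝ → ℝ → ℝ → ℝ := fun t x y => deriv (fun s => u s x y) t

/-- Tangential derivative `∂ₓ` (time-dependent functions). -/
def px (u : ℝ → ℝ → ℝ → ℝ) : ℝ → ℝ → ℝ → ℝ := fun t x y => deriv (fun x' => u t x' y) x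

/-- Normal derivative `∂_y` (time-dependent functions). -/
def py (u : ℝ → ℝ → ℝ → ℝ) : ℝ → ℝ → ℝ → ℝ := fun t x y => deriv (fun y' => u t x y') y

/-- The normal velocity `v(t,x,y) = -∫₀^y ∂ₓu(t,x,ỹ) dỹ`. -/
def vv (u : ℝ → ℝ → ℝ → ℝ) : ℝ → ℝ → ℝ → ℝ :=
  fun t x y => -∫ s in (0 : ℝ)..y, px u t x s

/-- The auxiliary function `φ = ∂ₜu + u∂ₓu + v∂_yu`. -/
def phi (u : ℝ → ℝ → ℝ → ℝ) : ℝ → ℝ → ℝ → ℝ :=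
  fun t x y => pt u t x y + u t x y * px u t x y + vv u t x y * py u t x y

/-- `u` solves the 2D hyperbolic Prandtl system on `[0,T]`, with the no-slip boundary
condition and decay of `u` at `y → ∞`. -/
def Solves (u : ℝ → ℝ → ℝ → ℝ) (T : ℝ) : Prop :=
  (∀ t ∈ Set.Icc (0 : ℝ) T, ∀ x : ℝ, ∀ y ∈ Set.Ioi (0 : ℝ),
      pt (pt u) t x y + pt u t x y
        + u t x y * px u t x y + vv u t x y * py u t x y
        + pt (fun t' x' y' => u t' x' y' * px u t' x' y' + vv u t' x' y' * py u t' x' y') t x y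
        - py (py u) t x y = 0)
  ∧ (∀ t ∈ Set.Icc (0 : ℝ) T, ∀ x : ℝ, u t x 0 = 0)
  ∧ (∀ t ∈ Set.Icc (0 : ℝ) T, ∀ x : ℝ, Tendsto (fun y => u t x y) atTop (nhds 0))

/-- `U` is the auxiliary function `𝒰` solving
`(∂ₜ + u∂ₓ + v∂_y)∫₀^y 𝒰 dỹ = -∂ₓv`, `𝒰|_{t=0} = 0`. -/
def AuxU (u U : ℝ → ℝ → ℝ → ℝ) (T : ℝ) : Prop :=
  (∀ t ∈ Set.Icc (0 : ℝ) T, ∀ x : ℝ, ∀ y ∈ Set.Ioi (0 : ℝ),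
      pt (fun t' x' y' => ∫ s in (0 : ℝ)..y', U t' x' s) t x y
        + u t x y * px (fun t' x' y' => ∫ s in (0 : ℝ)..y', U t' x' s) t x y
        + vv u t x y * py (fun t' x' y' => ∫ s in (0 : ℝ)..y', U t' x' s) t x y
        = -px (vv u) t x y)
  ∧ (∀ x : ℝ, ∀ y : ℝ, U 0 x y = 0)

/-- The auxiliary function `λ = ∂ₓu - (∂_yu)∫₀^y 𝒰 dỹ`. -/
def lam (u U : ℝ → ℝ → ℝ → ℝ) : ℝ → ℝ → ℝ → ℝ :=
  fun t x y => px u t x y - py u t x y * ∫ s in (0 : ℝ)..y, U t x s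

/-- `|a|²_{X_ρ}` for a time slice `a = (us, Us, ls, fs)` of `(u, 𝒰, λ, φ)`. -/
def Xsq (ρ ℓ : ℝ) (us Us ls fs : ℝ → ℝ → ℝ) : ℝ :=
  (∑' m : ℕ, (Nc ρ (m + 1)) ^ 2 * sqL2 (Dx m Us))
  + (∑' m : ℕ, ((m : ℝ) + 1) * (Nc ρ (m + 1)) ^ 2 * sqL2 (wt (ℓ - 1) (Dx m ls)))
  + ∑' m : ℕ, ∑' k : ℕ, ((m : ℝ) + 1) ^ 2 * (Hc ρ (m + 1) k) ^ 2 *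
      (sqL2 (wt ℓ (Dx m (Dy k fs))) + sqL2 (wt ℓ (Dx m (Dy (k + 1) us))))

/-- `|a|²_{Y_ρ}` for a time slice `a = (us, Us, ls, fs)` of `(u, 𝒰, λ, φ)`. -/
def Ysq (ρ ℓ : ℝ) (us Us ls fs : ℝ → ℝ → ℝ) : ℝ :=
  (∑' m : ℕ, ((m : ℝ) + 1) * (Nc ρ (m + 1)) ^ 2 * sqL2 (Dx m Us))
  + (∑' m : ℕ, ((m : ℝ) + 1) ^ 2 * (Nc ρ (m + 1)) ^ 2 * sqL2 (wt (ℓ - 1) (Dx m ls)))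
  + ∑' m : ℕ, ∑' k : ℕ, ((m : ℝ) + (k : ℝ) + 1) * ((m : ℝ) + 1) ^ 2 * (Hc ρ (m + 1) k) ^ 2 *
      (sqL2 (wt ℓ (Dx m (Dy k fs))) + sqL2 (wt ℓ (Dx m (Dy (k + 1) us))))

/-- `|a|_{X_ρ}`. -/
def Xnorm (ρ ℓ : ℝ) (us Us ls fs : ℝ → ℝ → ℝ) : ℝ := Real.sqrt (Xsq ρ ℓ us Us ls fs)

/-- `|a|_{Y_ρ}`. -/
def Ynorm (ρ ℓ : ℝ) (us Us ls fs : ℝ → ℝ → ℝ) : ℝ := Real.sqrt (Ysq ρ ℓ us Us ls fs)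

end HypP

open HypP

/-! Write `m = j + i`, so `i ≤ j`, and let `b = m!/(j! i!)`, `G = (j+1)!(i+3)!/(m+1)!`.
The powers of `ρ` in `N_{ρ,m+1}/(N_{ρ,j+1}N_{ρ,i+3})` leave `ρ⁻⁴`, so the square of the quantity
is `b² G³ ((m+2)/((j+2)(i+4)))¹⁸ / ρ⁸`. Here `b ≥ 1`, the factorials cancel in
`b G = (j+1)(i+1)(i+2)(i+3)/(m+1) ≤ (i+4)³`, and `m + 2 ≤ 2(j+2)`, so the square is at most
`2¹⁸ / (ρ⁸ (i+4)⁹)`. Finally `ρ ≥ ρ₀/e`. -/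

open Nat

namespace HypP

theorem Nc_sq (ρ : ℝ) (n : ℕ) :
    Nc ρ n ^ 2 = ρ ^ (2 * n + 2) * ((n : ℝ) + 1) ^ 18 / (n ! : ℝ) ^ 3 := by
  rw [Nc, Hc, div_pow, mul_pow, mul_pow, Real.sq_sqrt (by positivity)]
  simp only [add_zero, Nat.cast_zero]
  ring

theorem sq_Nc_div_Nc_mul_Nc {ρ : ℝ} (hρ : ρ ≠ 0) {a b c : ℕ} (h : a + 3 = b + c) :
    (Nc ρ a / (Nc ρ b * Nc ρ c)) ^ 2
      = (((a : ℝ) + 1) / (((b : ℝ) + 1) * ((c : ℝ) + 1))) ^ 18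
        * ((b ! * c ! : ℝ) / a !) ^ 3 / ρ ^ 8 := by
  rw [div_pow, mul_pow, Nc_sq, Nc_sq, Nc_sq]
  field_simp
  rw [← pow_add, ← pow_add]
  congr 1
  omega

theorem one_le_factorial_add_div_factorial_mul_factorial (j i : ℕ) :
    1 ≤ ((j + i)! : ℝ) / (j ! * i !) := by
  rw [one_le_div (by positivity)]
  exact_mod_cast Nat.le_of_dvd (Nat.factorial_pos _)
    (Nat.factorial_mul_factorial_dvd_factorial_add j i)

theorem factorial_add_div_mul_factorial_ratio_le (j i : ℕ) :
    ((j + i)! : ℝ) / (j ! * i !) * (((j + 1)! * (i + 3)! : ℝ) / (j + i + 1)!)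
      ≤ ((i : ℝ) + 4) ^ 3 := by
  have h_eq : ((j + i)! : ℝ) / (j ! * i !) * (((j + 1)! * (i + 3)! : ℝ) / (j + i + 1)!)
      = (j + 1) * ((i + 1) * (i + 2) * (i + 3)) / (j + i + 1) := by
    simp only [Nat.factorial_succ, Nat.cast_mul]
    push_cast
    field_simp
    ring
  have hi : (0 : ℝ) ≤ i := i.cast_nonneg
  have hj : (0 : ℝ) ≤ j := j.cast_nonneg
  rw [h_eq, div_le_iff₀ (by positivity)]
  calc ((j : ℝ) + 1) * ((i + 1) * (i + 2) * (i + 3))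
      ≤ (j + i + 1) * ((i + 4) * (i + 4) * (i + 4)) := by gcongr <;> linarith
    _ = ((i : ℝ) + 4) ^ 3 * (j + i + 1) := by ring

theorem sq_choose_mul_Nc_ratio_le {ρ : ℝ} (hρ : 0 < ρ) {j i : ℕ} (hij : i ≤ j) :
    (((j + i)! : ℝ) / (j ! * i !) * (Nc ρ (j + i + 1) / (Nc ρ (j + 1) * Nc ρ (i + 3)))) ^ 2
      ≤ (2 ^ 9 / (ρ ^ 4 * (i + 1))) ^ 2 := by
  set b : ℝ := ((j + i)! : ℝ) / (j ! * i !)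
  set G : ℝ := ((j + 1)! * (i + 3)! : ℝ) / (j + i + 1)!
  set P : ℝ := ((j : ℝ) + i + 2) / ((j + 2) * (i + 4))
  have hb : 1 ≤ b := one_le_factorial_add_div_factorial_mul_factorial j i
  have hG : 0 ≤ G := by positivity
  have hP : 0 ≤ P := by positivity
  have hP_le : P ≤ 2 / (i + 4) := by
    have hij' : (i : ℝ) ≤ j := by exact_mod_cast hij
    rw [div_le_div_iff₀ (by positivity) (by positivity)]
    nlinarith
  have hbG : b * G ≤ ((i : ℝ) + 4) ^ 3 := factorial_add_div_mul_factorial_ratio_le j i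
  calc (b * (Nc ρ (j + i + 1) / (Nc ρ (j + 1) * Nc ρ (i + 3)))) ^ 2
      = b ^ 2 * P ^ 18 * G ^ 3 / ρ ^ 8 := by
        have hP_cast : (((j + i + 1 : ℕ) : ℝ) + 1)
            / ((((j + 1 : ℕ) : ℝ) + 1) * (((i + 3 : ℕ) : ℝ) + 1)) = P := by
          simp only [P]
          push_cast
          ring_nf
        rw [mul_pow, sq_Nc_div_Nc_mul_Nc hρ.ne' (by omega), hP_cast]
        ring
    _ ≤ (b * G * P ^ 6) ^ 3 / ρ ^ 8 := by
        rw [show (b * G * P ^ 6) ^ 3 = b ^ 3 * P ^ 18 * G ^ 3 by ring]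
        gcongr
        norm_num
    _ ≤ (((i : ℝ) + 4) ^ 3 * (2 / (i + 4)) ^ 6) ^ 3 / ρ ^ 8 := by gcongr
    _ = 2 ^ 18 / (ρ ^ 8 * ((i : ℝ) + 4) ^ 9) := by
        field_simp
    _ ≤ 2 ^ 18 / (ρ ^ 8 * ((i : ℝ) + 1) ^ 2) := by
        gcongr
        calc ((i : ℝ) + 1) ^ 2 ≤ ((i : ℝ) + 4) ^ 2 := by gcongr; norm_num
          _ ≤ ((i : ℝ) + 4) ^ 9 := pow_le_pow_right₀ (by linarith [i.cast_nonneg (α := ℝ)]) (by norm_num)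
    _ = (2 ^ 9 / (ρ ^ 4 * (i + 1))) ^ 2 := by rw [div_pow, mul_pow, ← pow_mul, ← pow_mul]

theorem choose_mul_Nc_ratio_le {ρ : ℝ} (hρ : 0 < ρ) {j i : ℕ} (hij : i ≤ j) :
    ((j + i)! : ℝ) / (j ! * i !) * (Nc ρ (j + i + 1) / (Nc ρ (j + 1) * Nc ρ (i + 3)))
      ≤ 2 ^ 9 / ρ ^ 4 / (i + 1) := by
  refine le_of_pow_le_pow_left₀ two_ne_zero (by positivity) ?_
  rw [div_div]
  exact sq_choose_mul_Nc_ratio_le hρ hij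

end HypP

/-- estimate (3.5): for `⌊m/2⌋ + 1 ≤ j ≤ m`,
`(m!/(j!(m−j)!)) · N_{ρ,m+1}/(N_{ρ,j+1}N_{ρ,m−j+3}) ≤ C/(m−j+1)`. -/
theorem weight_estimate_fe2 (ρ₀ : ℝ) (hρ₀ : 0 < ρ₀) :
    ∃ C : ℝ, 0 < C ∧
      ∀ ρ : ℝ, (Real.exp 1)⁻¹ * ρ₀ ≤ ρ → ρ ≤ ρ₀ →
        ∀ m j : ℕ, m / 2 + 1 ≤ j → j ≤ m →
          (m.factorial : ℝ) / ((j.factorial : ℝ) * ((m - j).factorial : ℝ))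
              * (Nc ρ (m + 1) / (Nc ρ (j + 1) * Nc ρ (m - j + 3)))
            ≤ C / ((m : ℝ) - (j : ℝ) + 1) := by
  refine ⟨2 ^ 9 / ((Real.exp 1)⁻¹ * ρ₀) ^ 4, by positivity, ?_⟩
  intro ρ hρ₀ρ _ m j hj hjm
  obtain ⟨i, rfl⟩ : ∃ i, m = j + i := ⟨m - j, by omega⟩
  have hρ : 0 < ρ := lt_of_lt_of_le (by positivity) hρ₀ρ
  rw [Nat.add_sub_cancel_left, Nat.cast_add, add_sub_cancel_left]
  calc _ ≤ 2 ^ 9 / ρ ^ 4 / ((i : ℝ) + 1) := choose_mul_Nc_ratio_le hρ (by omega)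
    _ ≤ _ := by gcongr
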